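/- Let n ≥ 2 and let Bⁿ be the open unit ball in ℝⁿ. For all x,y ∈ Bⁿ one has v_{Bⁿ}(x,y) ≤ ρ_{Bⁿ}(x,y), and the inequality is sharp: for every ε > 0 there exist distinct x,y ∈ Bⁿ with v_{Bⁿ}(x,y) > (1−ε)·ρ_{Bⁿ}(x,y). -/

import Mathlib

open EuclideanGeometry Real Set

/-- The visual angle metric on a domain `G ⊊ ℝⁿ`:
`v_G(x,y) = sup_{z ∈ ∂G} ∠(x,z,y)`. -/
noncomputable def visualAngle {n : ℕ} (G : Set (EuclideanSpace ℝ (Fin n)))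
    (x y : EuclideanSpace ℝ (Fin n)) : ℝ :=
  sSup ((fun z => ∠ x z y) '' frontier G)

/-- The hyperbolic metric of the unit ball:
`ρ_{Bⁿ}(x,y) = 2 arsinh(|x−y|/√((1−|x|²)(1−|y|²)))`. -/
noncomputable def rhoBall {n : ℕ} (x y : EuclideanSpace ℝ (Fin n)) : ℝ :=
  2 * Real.arsinh (dist x y / Real.sqrt ((1 - ‖x‖ ^ 2) * (1 - ‖y‖ ^ 2)))

/-! For `z` on the unit sphere write `u = x - z`, `v = y - z` and `θ = ∠ x z y`. Since
`1 - ‖x‖² = -2⟪z, u⟫ - ‖u‖²`, reflecting `u` in `z^⊥` and applying Cauchy–Schwarz gives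
`(1 - ‖x‖²)(1 - ‖y‖²) ≤ 4‖u‖‖v‖cos²(θ/2)`, while the law of cosines gives
`‖x - y‖² ≥ 4‖u‖‖v‖sin²(θ/2)`. Hence `tan(θ/2) ≤ ‖x - y‖ / √((1 - ‖x‖²)(1 - ‖y‖²))`, and
`θ/2 ≤ arsinh(tan(θ/2))` because the inverse Gudermannian function `arsinh ∘ tan` has derivative
`sec ≥ 1`.

For sharpness take `x, y = (1 - a)e ± a²f` with `e, f` orthonormal and `z = e`: both the angle at
`e` and `ρ(x, y)` are `2a + O(a²)`. -/

open scoped RealInnerProductSpace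

namespace Real

theorem le_arsinh_tan {t : ℝ} (h0 : 0 ≤ t) (h1 : t < π / 2) : t ≤ arsinh (tan t) := by
  have hcos : ∀ s ∈ Ico 0 (π / 2), 0 < cos s := fun s hs =>
    cos_pos_of_mem_Ioo ⟨by linarith [hs.1, pi_pos], hs.2⟩
  have hderiv : ∀ s ∈ Ico 0 (π / 2), HasDerivAt (fun s => arsinh (tan s) - s)
      ((√(1 + tan s ^ 2))⁻¹ • (1 / cos s ^ 2) - 1) s := fun s hs =>
    ((hasDerivAt_tan (hcos s hs).ne').arsinh).sub (hasDerivAt_id s)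
  have hmono : MonotoneOn (fun s => arsinh (tan s) - s) (Ico 0 (π / 2)) := by
    refine monotoneOn_of_hasDerivWithinAt_nonneg (convex_Ico _ _)
      (fun s hs => (hderiv s hs).continuousAt.continuousWithinAt)
      (fun s hs => (hderiv s (interior_subset hs)).hasDerivWithinAt) fun s hs => ?_
    have hc := hcos s (interior_subset hs)
    have hsqrt : √(1 + tan s ^ 2) = (cos s)⁻¹ := by
      rw [← inv_inv (1 + tan s ^ 2), inv_one_add_tan_sq hc.ne', sqrt_inv, sqrt_sq hc.le]
    rw [hsqrt, smul_eq_mul, inv_inv, sub_nonneg, ← div_eq_mul_one_div, sq,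
      div_mul_cancel_right₀ hc.ne', one_le_inv₀ hc]
    exact cos_le_one s
  simpa using hmono ⟨le_rfl, by positivity⟩ ⟨h0, h1⟩ h0

theorem arsinh_le_self {x : ℝ} (hx : 0 ≤ x) : arsinh x ≤ x := by
  simpa using arsinh_le_arsinh.mpr (self_le_sinh_iff.mpr hx)

theorem cos_sq_half (θ : ℝ) : cos (θ / 2) ^ 2 = (1 + cos θ) / 2 := by
  rw [cos_sq, mul_div_cancel₀ _ two_ne_zero]; ring

theorem sin_sq_half (θ : ℝ) : sin (θ / 2) ^ 2 = (1 - cos θ) / 2 := by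
  rw [sin_sq, cos_sq_half]; ring

end Real

section InnerProductSpace

variable {V : Type*} [NormedAddCommGroup V] [InnerProductSpace ℝ V]

theorem two_mul_inner_mul_inner_le_of_norm_eq_one {z : V} (hz : ‖z‖ = 1) (u v : V) :
    2 * ⟪z, u⟫ * ⟪z, v⟫ ≤ ⟪u, v⟫ + ‖u‖ * ‖v‖ := by
  -- reflect `u` in the hyperplane orthogonal to `z`
  set w := u - (2 * ⟪z, u⟫) • z
  have hw : ‖w‖ = ‖u‖ := by
    refine sq_eq_sq₀ (norm_nonneg _) (norm_nonneg _) |>.mp ?_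
    rw [norm_sub_sq_real, norm_smul, real_inner_smul_right, hz, real_inner_comm]
    simp only [norm_mul, Real.norm_eq_abs, abs_two, mul_pow, sq_abs]
    ring
  have hwv : ⟪w, v⟫ = ⟪u, v⟫ - 2 * ⟪z, u⟫ * ⟪z, v⟫ := by
    rw [inner_sub_left, real_inner_smul_left]
  have := neg_le_of_abs_le (abs_real_inner_le_norm w v)
  rw [hwv, hw] at this
  linarith

theorem one_sub_norm_sq_mul_one_sub_norm_sq_le {x y z : V} (hx : ‖x‖ ≤ 1) (hy : ‖y‖ ≤ 1)
    (hz : ‖z‖ = 1) :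
    (1 - ‖x‖ ^ 2) * (1 - ‖y‖ ^ 2) ≤ 4 * dist x z * dist y z * cos (∠ x z y / 2) ^ 2 := by
  have key : ∀ w : V, 1 - ‖w‖ ^ 2 = -2 * ⟪z, w - z⟫ - ‖w - z‖ ^ 2 := fun w => by
    conv_lhs => rw [← sub_add_cancel w z]
    rw [norm_add_sq_real, hz, real_inner_comm]
    ring
  have hx' : 0 ≤ 1 - ‖x‖ ^ 2 := by nlinarith [norm_nonneg x]
  have hy' : 0 ≤ 1 - ‖y‖ ^ 2 := by nlinarith [norm_nonneg y]
  have hcos := InnerProductGeometry.cos_angle_mul_norm_mul_norm (x - z) (y - z)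
  have hrefl := two_mul_inner_mul_inner_le_of_norm_eq_one hz (x - z) (y - z)
  rw [EuclideanGeometry.angle, vsub_eq_sub, vsub_eq_sub, cos_sq_half, dist_eq_norm, dist_eq_norm]
  calc (1 - ‖x‖ ^ 2) * (1 - ‖y‖ ^ 2) ≤ (-2 * ⟪z, x - z⟫) * (-2 * ⟪z, y - z⟫) := by
        apply mul_le_mul <;> nlinarith [key x, key y]
    _ ≤ _ := by nlinarith

theorem four_mul_dist_mul_dist_mul_sin_sq_half_le (x y z : V) :
    4 * dist x z * dist y z * sin (∠ x z y / 2) ^ 2 ≤ dist x y ^ 2 := by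
  have := law_cos x z y
  rw [sin_sq_half]
  nlinarith [sq_nonneg (dist x z - dist y z)]

theorem dist_sq_le_dist_sq_mul_angle_sq {x y z : V} (h : dist x z = dist y z) :
    dist x y ^ 2 ≤ dist x z ^ 2 * ∠ x z y ^ 2 := by
  have hcos := law_cos x z y
  rw [← h] at hcos
  nlinarith [one_sub_sq_div_two_le_cos (x := ∠ x z y), sq_nonneg (dist x z)]

theorem norm_smul_add_smul_sq {e f : V} (he : ‖e‖ = 1) (hf : ‖f‖ = 1) (hef : ⟪e, f⟫ = 0)
    (α β : ℝ) : ‖α • e + β • f‖ ^ 2 = α ^ 2 + β ^ 2 := by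
  rw [norm_add_sq_real, norm_smul, norm_smul, real_inner_smul_left, real_inner_smul_right, hef,
    he, hf, Real.norm_eq_abs, Real.norm_eq_abs]
  simp only [mul_zero, mul_one, sq_abs, add_zero]

end InnerProductSpace

theorem rhoBall_nonneg {n : ℕ} (x y : EuclideanSpace ℝ (Fin n)) : 0 ≤ rhoBall x y := by
  rw [rhoBall]
  have := arsinh_nonneg_iff.mpr (by positivity : 0 ≤ dist x y / √((1 - ‖x‖ ^ 2) * (1 - ‖y‖ ^ 2)))
  positivity

theorem angle_le_visualAngle {n : ℕ} {G : Set (EuclideanSpace ℝ (Fin n))}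
    {x y z : EuclideanSpace ℝ (Fin n)} (hz : z ∈ frontier G) : ∠ x z y ≤ visualAngle G x y :=
  le_csSup ⟨π, by rintro _ ⟨w, -, rfl⟩; exact angle_le_pi x w y⟩ ⟨z, hz, rfl⟩

theorem angle_le_rhoBall {n : ℕ} {x y z : EuclideanSpace ℝ (Fin n)} (hx : ‖x‖ < 1)
    (hy : ‖y‖ < 1) (hz : ‖z‖ = 1) : ∠ x z y ≤ rhoBall x y := by
  set P := (1 - ‖x‖ ^ 2) * (1 - ‖y‖ ^ 2)
  have hP : 0 < P := mul_pos (by nlinarith [norm_nonneg x]) (by nlinarith [norm_nonneg y])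
  have hupper := one_sub_norm_sq_mul_one_sub_norm_sq_le hx.le hy.le hz
  have hlower := four_mul_dist_mul_dist_mul_sin_sq_half_le x y z
  have ht0 : 0 ≤ ∠ x z y / 2 := by linarith [angle_nonneg x z y]
  have htπ : ∠ x z y / 2 ≤ π / 2 := by linarith [angle_le_pi x z y]
  suffices ∠ x z y / 2 ≤ arsinh (dist x y / √P) by rw [rhoBall]; linarith
  generalize ∠ x z y / 2 = t at *
  replace htπ : t < π / 2 := by
    refine htπ.lt_of_ne fun h => ?_
    rw [h, cos_pi_div_two] at hupper
    linarith
  have hcos : 0 < cos t := cos_pos_of_mem_Ioo ⟨by linarith [pi_pos], htπ⟩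
  have hsin : 0 ≤ sin t := sin_nonneg_of_nonneg_of_le_pi ht0 (by linarith [pi_pos])
  have htan : tan t ≤ dist x y / √P := by
    rw [le_div_iff₀ (sqrt_pos.mpr hP), tan_eq_sin_div_cos, div_mul_eq_mul_div, div_le_iff₀ hcos,
      ← pow_le_pow_iff_left₀ (by positivity) (by positivity) two_ne_zero, mul_pow, mul_pow,
      sq_sqrt hP.le]
    nlinarith [mul_le_mul_of_nonneg_left hupper (sq_nonneg (sin t)),
      mul_le_mul_of_nonneg_left hlower (sq_nonneg (cos t))]
  exact (le_arsinh_tan ht0 htπ).trans (arsinh_le_arsinh.mpr htan)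

theorem visualAngle_ball_le_rhoBall {n : ℕ} {x y : EuclideanSpace ℝ (Fin n)}
    (hx : x ∈ Metric.ball 0 1) (hy : y ∈ Metric.ball 0 1) :
    visualAngle (Metric.ball 0 1) x y ≤ rhoBall x y := by
  refine Real.sSup_le ?_ (rhoBall_nonneg x y)
  rintro _ ⟨z, hz, rfl⟩
  rw [frontier_ball _ one_ne_zero, mem_sphere_zero_iff_norm] at hz
  exact angle_le_rhoBall (mem_ball_zero_iff.mp hx) (mem_ball_zero_iff.mp hy) hz

-- `θ` and `ρ` stand for the angle at `e` and `ρ(x, y)` in the sharpness example, both `≈ 2a`.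
theorem one_sub_two_mul_mul_lt_of_sq_le {a θ ρ : ℝ} (ha : 0 < a) (ha1 : a ≤ 1 / 2) (hθ0 : 0 ≤ θ)
    (hθ : 4 * a ^ 2 ≤ (1 + a ^ 2) * θ ^ 2) (hρ : ρ * (2 - a - a ^ 3) ≤ 4 * a) :
    (1 - 2 * a) * ρ < θ := by
  have hD : 0 < 2 - a - a ^ 3 := by nlinarith
  have hpoly : 4 * (1 - 2 * a) ^ 2 * (1 + a ^ 2) < (2 - a - a ^ 3) ^ 2 := by
    nlinarith [pow_pos ha 2, pow_pos ha 3, pow_pos ha 4, pow_pos ha 5]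
  have hsq : ((1 - 2 * a) * (4 * a)) ^ 2 < (θ * (2 - a - a ^ 3)) ^ 2 := by
    nlinarith [mul_lt_mul_of_pos_left hpoly (by positivity : (0 : ℝ) < 4 * a ^ 2),
      mul_le_mul_of_nonneg_right hθ (sq_nonneg (2 - a - a ^ 3))]
  have hlt := (pow_lt_pow_iff_left₀ (by nlinarith) (by positivity) two_ne_zero).mp hsq
  refine lt_of_mul_lt_mul_right ?_ hD.le
  calc (1 - 2 * a) * ρ * (2 - a - a ^ 3) ≤ (1 - 2 * a) * (4 * a) := by
        rw [mul_assoc]; exact mul_le_mul_of_nonneg_left hρ (by linarith)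
    _ < θ * (2 - a - a ^ 3) := hlt

theorem exists_lt_visualAngle_ball {n : ℕ} (hn : 2 ≤ n) {ε : ℝ} (hε : 0 < ε) (hε1 : ε ≤ 1) :
    ∃ x ∈ Metric.ball (0 : EuclideanSpace ℝ (Fin n)) 1,
      ∃ y ∈ Metric.ball (0 : EuclideanSpace ℝ (Fin n)) 1,
        x ≠ y ∧ (1 - ε) * rhoBall x y < visualAngle (Metric.ball 0 1) x y := by
  obtain ⟨hnorm, hinner⟩ := (EuclideanSpace.basisFun (Fin n) ℝ).orthonormal
  set e := EuclideanSpace.basisFun (Fin n) ℝ ⟨0, by omega⟩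
  set f := EuclideanSpace.basisFun (Fin n) ℝ ⟨1, by omega⟩
  have he : ‖e‖ = 1 := hnorm _
  have hf : ‖f‖ = 1 := hnorm _
  have hef : ⟪e, f⟫ = 0 := hinner (by simp)
  obtain ⟨a, rfl⟩ : ∃ a, ε = 2 * a := ⟨ε / 2, by ring⟩
  have ha : 0 < a := by linarith
  have ha1 : a ≤ 1 / 2 := by linarith
  set x := (1 - a) • e + a ^ 2 • f
  set y := (1 - a) • e + (-a ^ 2) • f
  have hP : 0 < 2 * a - a ^ 2 - a ^ 4 := by nlinarith [pow_pos ha 3]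
  have hx : ‖x‖ ^ 2 = 1 - (2 * a - a ^ 2 - a ^ 4) := by
    rw [norm_smul_add_smul_sq he hf hef]; ring
  have hy : ‖y‖ ^ 2 = 1 - (2 * a - a ^ 2 - a ^ 4) := by
    rw [norm_smul_add_smul_sq he hf hef]; ring
  have hxy : dist x y = 2 * a ^ 2 := by
    rw [dist_eq_norm, show x - y = (2 * a ^ 2) • f by module, norm_smul, hf, mul_one,
      Real.norm_of_nonneg (by positivity)]
  have hxe : dist x e ^ 2 = a ^ 2 * (1 + a ^ 2) := by
    rw [dist_eq_norm, show x - e = (-a) • e + a ^ 2 • f by module, norm_smul_add_smul_sq he hf hef]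
    ring
  have hye : dist y e ^ 2 = a ^ 2 * (1 + a ^ 2) := by
    rw [dist_eq_norm, show y - e = (-a) • e + (-a ^ 2) • f by module,
      norm_smul_add_smul_sq he hf hef]
    ring
  have hangle : 4 * a ^ 2 ≤ (1 + a ^ 2) * ∠ x e y ^ 2 := by
    have h := dist_sq_le_dist_sq_mul_angle_sq
      ((sq_eq_sq₀ dist_nonneg dist_nonneg).mp (hxe.trans hye.symm))
    rw [hxy, hxe] at h
    nlinarith [pow_pos ha 2]
  have hρ : rhoBall x y * (2 - a - a ^ 3) ≤ 4 * a := by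
    have hD : 0 < 2 - a - a ^ 3 := by nlinarith [pow_pos ha 3]
    rw [rhoBall, hx, hy, sub_sub_cancel, sqrt_mul_self hP.le, hxy]
    calc 2 * arsinh (2 * a ^ 2 / (2 * a - a ^ 2 - a ^ 4)) * (2 - a - a ^ 3)
        ≤ 2 * (2 * a ^ 2 / (2 * a - a ^ 2 - a ^ 4)) * (2 - a - a ^ 3) := by
          gcongr; exact arsinh_le_self (by positivity)
      _ = 4 * a := by field_simp; ring
  have he_mem : e ∈ frontier (Metric.ball (0 : EuclideanSpace ℝ (Fin n)) 1) := by
    rw [frontier_ball _ one_ne_zero, mem_sphere_zero_iff_norm, he]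
  refine ⟨x, ?_, y, ?_, ?_, ?_⟩
  · rw [mem_ball_zero_iff, ← sq_lt_one_iff₀ (norm_nonneg _), hx]; linarith
  · rw [mem_ball_zero_iff, ← sq_lt_one_iff₀ (norm_nonneg _), hy]; linarith
  · rw [← dist_ne_zero, hxy]; positivity
  · exact (one_sub_two_mul_mul_lt_of_sq_le ha ha1 (angle_nonneg _ _ _) hangle hρ).trans_le
      (angle_le_visualAngle he_mem)

theorem stmt5 (n : ℕ) (hn : 2 ≤ n) :
    (∀ x ∈ Metric.ball (0 : EuclideanSpace ℝ (Fin n)) 1,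
      ∀ y ∈ Metric.ball (0 : EuclideanSpace ℝ (Fin n)) 1,
        visualAngle (Metric.ball 0 1) x y ≤ rhoBall x y) ∧
    (∀ ε : ℝ, 0 < ε →
      ∃ x ∈ Metric.ball (0 : EuclideanSpace ℝ (Fin n)) 1,
        ∃ y ∈ Metric.ball (0 : EuclideanSpace ℝ (Fin n)) 1,
          x ≠ y ∧ (1 - ε) * rhoBall x y < visualAngle (Metric.ball 0 1) x y) := by
  refine ⟨fun x hx y hy => visualAngle_ball_le_rhoBall hx hy, fun ε hε => ?_⟩
  obtain ⟨x, hx, y, hy, hxy, hlt⟩ :=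
    exists_lt_visualAngle_ball hn (lt_min hε one_pos) (min_le_right ε 1)
  refine ⟨x, hx, y, hy, hxy, lt_of_le_of_lt ?_ hlt⟩
  exact mul_le_mul_of_nonneg_right (by linarith [min_le_left ε 1]) (rhoBall_nonneg x y)
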